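/- Let C be an additive category equipped with a nonempty family {(*_i, ω_i)}_{i∈I} of hermitian structures. The assignment F(M,{s_i}) = ((M, M, {s_i^{*_i} ∘ ω_{i,M}}, {s_i}), (id_M, id_M^op)), F(ψ) = (ψ, (ψ⁻¹)^op), defines a functor from the category SysSesq_I(C) of systems of sesquilinear forms over (C, {(*_i,ω_i)}) to the category Herm_1(TDA_I(C)) of unimodular 1-hermitian forms over the category of twisted double I-arrows, and F is an equivalence of categories. -/

import Mathlib

open CategoryTheory CategoryTheory.Limits

noncomputable section

universe v u

namespace HermCat

variable {C : Type u} [Category.{v} C] [Preadditive C]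

/-- A hermitian structure on an additive category `C`: a contravariant additive
functor `*` together with a natural transformation `ω : id → **` satisfying
`(ω_X)* ∘ ω_{X*} = id_{X*}`. -/
structure HermStructure (C : Type u) [Category.{v} C] [Preadditive C] where
  star : C → C
  starMap : ∀ {X Y : C}, (X ⟶ Y) → (star Y ⟶ star X)
  starMap_id : ∀ X : C, starMap (𝟙 X) = 𝟙 (star X)
  starMap_comp : ∀ {X Y Z : C} (f : X ⟶ Y) (g : Y ⟶ Z),
    starMap (f ≫ g) = starMap g ≫ starMap f
  starMap_add : ∀ {X Y : C} (f g : X ⟶ Y), starMap (f + g) = starMap f + starMap g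
  omega : ∀ X : C, X ⟶ star (star X)
  omega_natural : ∀ {X Y : C} (f : X ⟶ Y),
    f ≫ omega Y = omega X ≫ starMap (starMap f)
  omega_star : ∀ X : C, omega (star X) ≫ starMap (omega X) = 𝟙 (star X)

namespace HermStructure

variable (H : HermStructure C)

/-- The additive-monoid-hom incarnation of `starMap`. -/
def starHom (X Y : C) : (X ⟶ Y) →+ (H.star Y ⟶ H.star X) :=
  AddMonoidHom.mk' H.starMap (fun f g => H.starMap_add f g)

theorem starMap_zero (X Y : C) : H.starMap (0 : X ⟶ Y) = 0 :=
  (H.starHom X Y).map_zero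

theorem starMap_neg {X Y : C} (f : X ⟶ Y) : H.starMap (-f) = -H.starMap f :=
  (H.starHom X Y).map_neg f

theorem starMap_sub {X Y : C} (f g : X ⟶ Y) :
    H.starMap (f - g) = H.starMap f - H.starMap g :=
  (H.starHom X Y).map_sub f g

theorem starMap_nsmul {X Y : C} (n : ℕ) (f : X ⟶ Y) :
    H.starMap (n • f) = n • H.starMap f :=
  (H.starHom X Y).map_nsmul n f

theorem starMap_zsmul {X Y : C} (n : ℤ) (f : X ⟶ Y) :
    H.starMap (n • f) = n • H.starMap f :=
  (H.starHom X Y).map_zsmul n f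

/-- An object is reflexive if `ω_X` is an isomorphism. -/
def Reflexive (X : C) : Prop := IsIso (H.omega X)

/-- A sesquilinear form `s : M ⟶ M*` is unimodular if `s` and `s* ∘ ω_M` are
isomorphisms. -/
def IsUnimodular {M : C} (s : M ⟶ H.star M) : Prop :=
  IsIso s ∧ IsIso (H.omega M ≫ H.starMap s)

/-- A sesquilinear form `s : M ⟶ M*` is `ε`-hermitian if `s = ε • (s* ∘ ω_M)`. -/
def IsEpsHermitian (ε : ℤ) {M : C} (s : M ⟶ H.star M) : Prop :=
  s = ε • (H.omega M ≫ H.starMap s)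

/-- `f` is an isometry from `(M, s)` to `(M', s')` if it is an isomorphism with
`s = f* ∘ s' ∘ f`. -/
def IsIsometry {M M' : C} (s : M ⟶ H.star M) (s' : M' ⟶ H.star M')
    (f : M ⟶ M') : Prop :=
  IsIso f ∧ s = f ≫ s' ≫ H.starMap f

/-- Two sesquilinear forms are isometric if there is an isometry between them. -/
def Isometric {M M' : C} (s : M ⟶ H.star M) (s' : M' ⟶ H.star M') : Prop :=
  ∃ f : M ⟶ M', H.IsIsometry s s' f

section Biprod

variable [HasBinaryBiproducts C]

/-- The underlying object `Q ⊕ Q*` of the hyperbolic form. -/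
def hypObj (Q : C) : C := Q ⊞ H.star Q

/-- The hyperbolic `ε`-hermitian form `H_ε(Q)` on `Q ⊕ Q*`, given in matrix form
by `[[0, id_{Q*}], [ε·ω_Q, 0]]` (composed with the canonical identification
`Q* ⊕ Q** ≅ (Q ⊕ Q*)*`). -/
def hypForm (ε : ℤ) (Q : C) : H.hypObj Q ⟶ H.star (H.hypObj Q) :=
  biprod.lift (biprod.snd) (ε • (biprod.fst ≫ H.omega Q)) ≫
    biprod.desc (H.starMap biprod.fst) (H.starMap biprod.snd)

/-- A form is hyperbolic (as a unimodular `ε`-hermitian form) if it is isometric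
to `(Q ⊕ Q*, H_ε(Q))` for some reflexive object `Q`. -/
def IsHyperbolic (ε : ℤ) {M : C} (s : M ⟶ H.star M) : Prop :=
  ∃ Q : C, H.Reflexive Q ∧ H.Isometric s (H.hypForm ε Q)

/-- The orthogonal sum of two sesquilinear forms. -/
def orthSum {M M' : C} (s : M ⟶ H.star M) (s' : M' ⟶ H.star M') :
    M ⊞ M' ⟶ H.star (M ⊞ M') :=
  biprod.desc (s ≫ H.starMap biprod.fst) (s' ≫ H.starMap biprod.snd)

/-- The "split" form `[[0, f], [g, 0]]` on `M ⊕ N`, where `f : N ⟶ M*` and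
`g : M ⟶ N*`. -/
def splitForm {M N : C} (f : N ⟶ H.star M) (g : M ⟶ H.star N) :
    M ⊞ N ⟶ H.star (M ⊞ N) :=
  biprod.desc (g ≫ H.starMap biprod.snd) (f ≫ H.starMap biprod.fst)

end Biprod

end HermStructure

/-! ## The category of twisted double arrows -/

variable {ι : Type v}

/-- Objects of the category `TDA_I(C)` of twisted double `I`-arrows: quadruples
`(M, N, {f_i}, {g_i})` with `f_i, g_i : M ⟶ N^{*_i}`. -/
structure TDAObj (Hs : ι → HermStructure C) : Type (max u v) where
  M : C
  N : C
  f : ∀ i, M ⟶ (Hs i).star N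
  g : ∀ i, M ⟶ (Hs i).star N

namespace TDAObj

variable {Hs : ι → HermStructure C}

/-- Morphisms `(M,N,{f_i},{g_i}) ⟶ (M',N',{f'_i},{g'_i})` in `TDA_I(C)`: pairs
`(φ, ψ^op)` with `φ : M ⟶ M'`, `ψ : N' ⟶ N`, `f'_i ∘ φ = ψ^{*_i} ∘ f_i` and
`g'_i ∘ φ = ψ^{*_i} ∘ g_i`. -/
@[ext]
structure Hom (Z Z' : TDAObj Hs) : Type v where
  φ : Z.M ⟶ Z'.M
  ψ : Z'.N ⟶ Z.N
  condf : ∀ i, φ ≫ Z'.f i = Z.f i ≫ (Hs i).starMap ψ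
  condg : ∀ i, φ ≫ Z'.g i = Z.g i ≫ (Hs i).starMap ψ

instance category : Category (TDAObj Hs) where
  Hom := Hom
  id Z := ⟨𝟙 Z.M, 𝟙 Z.N, fun i => by simp [(Hs i).starMap_id],
    fun i => by simp [(Hs i).starMap_id]⟩
  comp {Z Z' Z''} u v := ⟨u.φ ≫ v.φ, v.ψ ≫ u.ψ,
    fun i => by
      rw [Category.assoc, v.condf i, ← Category.assoc, u.condf i, (Hs i).starMap_comp,
        Category.assoc],
    fun i => by
      rw [Category.assoc, v.condg i, ← Category.assoc, u.condg i, (Hs i).starMap_comp,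
        Category.assoc]⟩
  id_comp u := by apply Hom.ext <;> simp
  comp_id u := by apply Hom.ext <;> simp
  assoc u v w := by apply Hom.ext <;> simp

@[simp] theorem id_φ (Z : TDAObj Hs) : Hom.φ (𝟙 Z) = 𝟙 Z.M := rfl
@[simp] theorem id_ψ (Z : TDAObj Hs) : Hom.ψ (𝟙 Z) = 𝟙 Z.N := rfl
@[simp] theorem comp_φ {Z Z' Z'' : TDAObj Hs} (u : Z ⟶ Z') (v : Z' ⟶ Z'') :
    (u ≫ v).φ = u.φ ≫ v.φ := rfl
@[simp] theorem comp_ψ {Z Z' Z'' : TDAObj Hs} (u : Z ⟶ Z') (v : Z' ⟶ Z'') :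
    (u ≫ v).ψ = v.ψ ≫ u.ψ := rfl

theorem hom_ext {Z Z' : TDAObj Hs} {u v : Z ⟶ Z'} (h1 : Hom.φ u = Hom.φ v)
    (h2 : Hom.ψ u = Hom.ψ v) : u = v := Hom.ext h1 h2

instance homZero (Z Z' : TDAObj Hs) : Zero (Z ⟶ Z') :=
  ⟨⟨0, 0, fun i => by simp [(Hs i).starMap_zero], fun i => by simp [(Hs i).starMap_zero]⟩⟩

instance homAdd (Z Z' : TDAObj Hs) : Add (Z ⟶ Z') :=
  ⟨fun u v => ⟨u.φ + v.φ, u.ψ + v.ψ,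
    fun i => by simp [Preadditive.add_comp, Preadditive.comp_add, (Hs i).starMap_add,
      u.condf i, v.condf i],
    fun i => by simp [Preadditive.add_comp, Preadditive.comp_add, (Hs i).starMap_add,
      u.condg i, v.condg i]⟩⟩

instance homNeg (Z Z' : TDAObj Hs) : Neg (Z ⟶ Z') :=
  ⟨fun u => ⟨-u.φ, -u.ψ,
    fun i => by simp [Preadditive.neg_comp, Preadditive.comp_neg, (Hs i).starMap_neg,
      u.condf i],
    fun i => by simp [Preadditive.neg_comp, Preadditive.comp_neg, (Hs i).starMap_neg,
      u.condg i]⟩⟩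

instance homSub (Z Z' : TDAObj Hs) : Sub (Z ⟶ Z') :=
  ⟨fun u v => ⟨u.φ - v.φ, u.ψ - v.ψ,
    fun i => by simp [Preadditive.sub_comp, Preadditive.comp_sub, (Hs i).starMap_sub,
      u.condf i, v.condf i],
    fun i => by simp [Preadditive.sub_comp, Preadditive.comp_sub, (Hs i).starMap_sub,
      u.condg i, v.condg i]⟩⟩

instance homSMulNat (Z Z' : TDAObj Hs) : SMul ℕ (Z ⟶ Z') :=
  ⟨fun n u => ⟨n • u.φ, n • u.ψ,
    fun i => by simp [Preadditive.nsmul_comp, Preadditive.comp_nsmul, (Hs i).starMap_nsmul,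
      u.condf i],
    fun i => by simp [Preadditive.nsmul_comp, Preadditive.comp_nsmul, (Hs i).starMap_nsmul,
      u.condg i]⟩⟩

instance homSMulInt (Z Z' : TDAObj Hs) : SMul ℤ (Z ⟶ Z') :=
  ⟨fun n u => ⟨n • u.φ, n • u.ψ,
    fun i => by simp [Preadditive.zsmul_comp, Preadditive.comp_zsmul, (Hs i).starMap_zsmul,
      u.condf i],
    fun i => by simp [Preadditive.zsmul_comp, Preadditive.comp_zsmul, (Hs i).starMap_zsmul,
      u.condg i]⟩⟩

@[simp] theorem add_φ {Z Z' : TDAObj Hs} (u v : Z ⟶ Z') : (u + v).φ = u.φ + v.φ := rfl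
@[simp] theorem add_ψ {Z Z' : TDAObj Hs} (u v : Z ⟶ Z') : (u + v).ψ = u.ψ + v.ψ := rfl
@[simp] theorem zero_φ {Z Z' : TDAObj Hs} : (0 : Z ⟶ Z').φ = 0 := rfl
@[simp] theorem zero_ψ {Z Z' : TDAObj Hs} : (0 : Z ⟶ Z').ψ = 0 := rfl
@[simp] theorem neg_φ {Z Z' : TDAObj Hs} (u : Z ⟶ Z') : (-u).φ = -u.φ := rfl
@[simp] theorem neg_ψ {Z Z' : TDAObj Hs} (u : Z ⟶ Z') : (-u).ψ = -u.ψ := rfl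

instance homAddCommGroup (Z Z' : TDAObj Hs) : AddCommGroup (Z ⟶ Z') :=
  Function.Injective.addCommGroup (fun u => (Hom.φ u, Hom.ψ u))
    (fun u v h => by
      apply hom_ext
      · exact congrArg Prod.fst h
      · exact congrArg Prod.snd h)
    rfl (fun _ _ => rfl) (fun _ => rfl) (fun _ _ => rfl) (fun _ _ => rfl) (fun _ _ => rfl)

instance preadditive : Preadditive (TDAObj Hs) where
  add_comp Z Z' Z'' u u' v := by apply hom_ext <;> simp
  comp_add Z Z' Z'' u v v' := by apply hom_ext <;> simp

end TDAObj

/-- The hermitian structure on the category of twisted double `I`-arrows. -/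
def tdaHerm (Hs : ι → HermStructure C) : HermStructure (TDAObj Hs) where
  star Z := ⟨Z.N, Z.M, fun i => (Hs i).omega Z.N ≫ (Hs i).starMap (Z.g i),
    fun i => (Hs i).omega Z.N ≫ (Hs i).starMap (Z.f i)⟩
  starMap {Z Z'} u := ⟨u.ψ, u.φ,
    fun i => by
      rw [← Category.assoc, (Hs i).omega_natural u.ψ, Category.assoc, Category.assoc,
        ← (Hs i).starMap_comp, ← u.condg i, (Hs i).starMap_comp],
    fun i => by
      rw [← Category.assoc, (Hs i).omega_natural u.ψ, Category.assoc, Category.assoc,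
        ← (Hs i).starMap_comp, ← u.condf i, (Hs i).starMap_comp]⟩
  starMap_id Z := by apply TDAObj.hom_ext <;> rfl
  starMap_comp u v := by apply TDAObj.hom_ext <;> rfl
  starMap_add u v := by apply TDAObj.hom_ext <;> rfl
  omega Z := ⟨𝟙 Z.M, 𝟙 Z.N,
    fun i => by
      simp only [Category.id_comp, (Hs i).starMap_id, Category.comp_id]
      rw [(Hs i).starMap_comp, ← Category.assoc, ← (Hs i).omega_natural (Z.f i),
        Category.assoc, (Hs i).omega_star, Category.comp_id],
    fun i => by
      simp only [Category.id_comp, (Hs i).starMap_id, Category.comp_id]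
      rw [(Hs i).starMap_comp, ← Category.assoc, ← (Hs i).omega_natural (Z.g i),
        Category.assoc, (Hs i).omega_star, Category.comp_id]⟩
  omega_natural u := by apply TDAObj.hom_ext <;> simp
  omega_star Z := by apply TDAObj.hom_ext <;> simp

/-! ## Biproducts in `TDA_I(C)` -/

namespace TDAObj

variable {Hs : ι → HermStructure C} [HasBinaryBiproducts C]

/-- The biproduct of two objects of `TDA_I(C)`. -/
def biprodObj (Z W : TDAObj Hs) : TDAObj Hs where
  M := Z.M ⊞ W.M
  N := Z.N ⊞ W.N
  f i := biprod.desc (Z.f i ≫ (Hs i).starMap biprod.fst) (W.f i ≫ (Hs i).starMap biprod.snd)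
  g i := biprod.desc (Z.g i ≫ (Hs i).starMap biprod.fst) (W.g i ≫ (Hs i).starMap biprod.snd)

/-- The binary bicone exhibiting `biprodObj Z W` as a biproduct. -/
def biprodBicone (Z W : TDAObj Hs) : BinaryBicone Z W where
  pt := biprodObj Z W
  fst := ⟨biprod.fst, biprod.inl,
    fun i => by
      apply biprod.hom_ext' <;>
      simp [biprodObj, ← (Hs i).starMap_comp, (Hs i).starMap_zero, (Hs i).starMap_id],
    fun i => by
      apply biprod.hom_ext' <;>
      simp [biprodObj, ← (Hs i).starMap_comp, (Hs i).starMap_zero, (Hs i).starMap_id]⟩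
  snd := ⟨biprod.snd, biprod.inr,
    fun i => by
      apply biprod.hom_ext' <;>
      simp [biprodObj, ← (Hs i).starMap_comp, (Hs i).starMap_zero, (Hs i).starMap_id],
    fun i => by
      apply biprod.hom_ext' <;>
      simp [biprodObj, ← (Hs i).starMap_comp, (Hs i).starMap_zero, (Hs i).starMap_id]⟩
  inl := ⟨biprod.inl, biprod.fst,
    fun i => by simp [biprodObj],
    fun i => by simp [biprodObj]⟩
  inr := ⟨biprod.inr, biprod.snd,
    fun i => by simp [biprodObj],
    fun i => by simp [biprodObj]⟩
  inl_fst := by apply hom_ext <;> exact biprod.inl_fst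
  inl_snd := by apply hom_ext <;> first | exact biprod.inl_snd | exact biprod.inr_fst
  inr_fst := by apply hom_ext <;> first | exact biprod.inr_fst | exact biprod.inl_snd
  inr_snd := by apply hom_ext <;> exact biprod.inr_snd

instance hasBinaryBiproducts : HasBinaryBiproducts (TDAObj Hs) where
  has_binary_biproduct Z W :=
    hasBinaryBiproduct_of_total (biprodBicone Z W) (by apply hom_ext <;> exact biprod.total)

end TDAObj

/-! ## Isomorphisms in `TDA_I(C)` -/

namespace TDAObj

variable {Hs : ι → HermStructure C}

theorem isIso_of {Z Z' : TDAObj Hs} (u : Z ⟶ Z') (h1 : IsIso u.φ) (h2 : IsIso u.ψ) :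
    IsIso u := by
  refine ⟨⟨⟨inv u.φ, inv u.ψ, fun i => ?_, fun i => ?_⟩, ?_, ?_⟩⟩
  · have h := u.condf i
    have : Z'.f i = inv u.φ ≫ Z.f i ≫ (Hs i).starMap u.ψ := by
      rw [← h, IsIso.inv_hom_id_assoc]
    rw [this, Category.assoc, Category.assoc, ← (Hs i).starMap_comp,
      IsIso.inv_hom_id, (Hs i).starMap_id, Category.comp_id]
  · have h := u.condg i
    have : Z'.g i = inv u.φ ≫ Z.g i ≫ (Hs i).starMap u.ψ := by
      rw [← h, IsIso.inv_hom_id_assoc]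
    rw [this, Category.assoc, Category.assoc, ← (Hs i).starMap_comp,
      IsIso.inv_hom_id, (Hs i).starMap_id, Category.comp_id]
  · apply hom_ext <;> simp
  · apply hom_ext <;> simp

end TDAObj

/-! ## Categories of (systems of) sesquilinear forms -/

/-- Objects of the category `Sesq(C)` of sesquilinear forms over `(C, H)`. -/
structure FormObj (H : HermStructure C) : Type (max u v) where
  pt : C
  form : pt ⟶ H.star pt

namespace FormObj

variable {H : HermStructure C}

/-- `Sesq(C)`: morphisms are isometries. -/
instance category : Category (FormObj H) where
  Hom X Y := { f : X.pt ⟶ Y.pt // H.IsIsometry X.form Y.form f }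
  id X := ⟨𝟙 X.pt, inferInstance, by simp [H.starMap_id]⟩
  comp {X Y Z} u v := ⟨u.1 ≫ v.1, by
    obtain ⟨uf, hu1, hu2⟩ := u
    obtain ⟨vf, hv1, hv2⟩ := v
    haveI := hu1; haveI := hv1
    refine ⟨inferInstance, ?_⟩
    show X.form = (uf ≫ vf) ≫ Z.form ≫ H.starMap (uf ≫ vf)
    rw [hu2, hv2, H.starMap_comp]
    simp⟩
  id_comp u := by apply Subtype.ext; simp
  comp_id u := by apply Subtype.ext; simp
  assoc u v w := by apply Subtype.ext; simp

@[simp] theorem id_val (X : FormObj H) : (𝟙 X : X ⟶ X).1 = 𝟙 X.pt := rfl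
@[simp] theorem comp_val {X Y Z : FormObj H} (u : X ⟶ Y) (v : Y ⟶ Z) :
    (u ≫ v).1 = u.1 ≫ v.1 := rfl

end FormObj

/-- The predicate selecting unimodular `ε`-hermitian forms. -/
def hermPred (H : HermStructure C) (ε : ℤ) : FormObj H → Prop :=
  fun X => H.IsUnimodular X.form ∧ H.IsEpsHermitian ε X.form

/-- The category `Herm_ε(C)` of unimodular `ε`-hermitian forms over `(C, H)`. -/
abbrev HermFormCat (H : HermStructure C) (ε : ℤ) := ObjectProperty.FullSubcategory (hermPred H ε)

/-- Objects of the category of systems of sesquilinear forms over `(C, {(*_i, ω_i)})`. -/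
structure SysFormObj (Hs : ι → HermStructure C) : Type (max u v) where
  pt : C
  form : ∀ i, pt ⟶ (Hs i).star pt

namespace SysFormObj

variable {Hs : ι → HermStructure C}

/-- `f` is an isometry of systems of sesquilinear forms. -/
def IsIsometry (X Y : SysFormObj Hs) (f : X.pt ⟶ Y.pt) : Prop :=
  IsIso f ∧ ∀ i, X.form i = f ≫ Y.form i ≫ (Hs i).starMap f

/-- Two systems of sesquilinear forms are isometric. -/
def Isometric (X Y : SysFormObj Hs) : Prop := ∃ f, IsIsometry X Y f

/-- The category of systems of sesquilinear forms, with isometries as morphisms. -/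
instance category : Category (SysFormObj Hs) where
  Hom X Y := { f : X.pt ⟶ Y.pt // IsIsometry X Y f }
  id X := ⟨𝟙 X.pt, inferInstance, fun i => by simp [(Hs i).starMap_id]⟩
  comp {X Y Z} u v := ⟨u.1 ≫ v.1, by
    obtain ⟨uf, hu1, hu2⟩ := u
    obtain ⟨vf, hv1, hv2⟩ := v
    haveI := hu1; haveI := hv1
    refine ⟨inferInstance, fun i => ?_⟩
    show X.form i = (uf ≫ vf) ≫ Z.form i ≫ (Hs i).starMap (uf ≫ vf)
    rw [hu2 i, hv2 i, (Hs i).starMap_comp]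
    simp⟩
  id_comp u := by apply Subtype.ext; simp
  comp_id u := by apply Subtype.ext; simp
  assoc u v w := by apply Subtype.ext; simp

/-- The orthogonal sum of two systems of sesquilinear forms. -/
def orthSum [HasBinaryBiproducts C] (X Y : SysFormObj Hs) : SysFormObj Hs where
  pt := X.pt ⊞ Y.pt
  form i := biprod.desc (X.form i ≫ (Hs i).starMap biprod.fst)
    (Y.form i ≫ (Hs i).starMap biprod.snd)

end SysFormObj

/-! ## The functor `F` from (systems of) sesquilinear forms to hermitian forms over `TDA` -/

section FFunctor

variable {Hs : ι → HermStructure C}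

theorem HermStructure.omega_starMap_key (H : HermStructure C) {M : C}
    (s : M ⟶ H.star M) :
    H.omega M ≫ H.starMap (H.omega M ≫ H.starMap s) = s := by
  rw [H.starMap_comp, ← Category.assoc, ← H.omega_natural s, Category.assoc,
    H.omega_star, Category.comp_id]

/-- The twisted double arrow `Z(M, {s_i}) = (M, M, {s_i^* ∘ ω_M}, {s_i})` associated with a
system of sesquilinear forms. -/
def sysZ {M : C} (s : ∀ i, M ⟶ (Hs i).star M) : TDAObj Hs :=
  ⟨M, M, fun i => (Hs i).omega M ≫ (Hs i).starMap (s i), fun i => s i⟩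

/-- The canonical `1`-hermitian form `(id_M, id_M^op)` on `Z(M, {s_i})`. -/
def sysZForm {M : C} (s : ∀ i, M ⟶ (Hs i).star M) :
    sysZ s ⟶ (tdaHerm Hs).star (sysZ s) :=
  ⟨𝟙 M, 𝟙 M,
    fun i => by
      simp only [tdaHerm, sysZ, Category.id_comp, (Hs i).starMap_id, Category.comp_id],
    fun i => by
      simp only [tdaHerm, sysZ, Category.id_comp, (Hs i).starMap_id, Category.comp_id]
      rw [(Hs i).omega_starMap_key]⟩

theorem sysZForm_isIso {M : C} (s : ∀ i, M ⟶ (Hs i).star M) : IsIso (sysZForm s) :=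
  TDAObj.isIso_of (sysZForm s) (inferInstanceAs (IsIso (𝟙 M)))
    (inferInstanceAs (IsIso (𝟙 M)))

theorem sysZForm_unimodular {M : C} (s : ∀ i, M ⟶ (Hs i).star M) :
    (tdaHerm Hs).IsUnimodular (sysZForm s) := by
  constructor
  · exact sysZForm_isIso s
  · exact TDAObj.isIso_of _ (inferInstanceAs (IsIso (𝟙 M ≫ 𝟙 M)))
      (inferInstanceAs (IsIso (𝟙 M ≫ 𝟙 M)))

theorem sysZForm_hermitian {M : C} (s : ∀ i, M ⟶ (Hs i).star M) :
    (tdaHerm Hs).IsEpsHermitian 1 (sysZForm s) := by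
  show _ = (1 : ℤ) • _
  rw [one_zsmul]
  apply TDAObj.hom_ext <;> simp [tdaHerm, sysZForm] <;>
    first | exact (Category.id_comp _).symm | exact (Category.comp_id _).symm

/-- The object part of the functor `F`. -/
def Fobj (X : SysFormObj Hs) : HermFormCat (tdaHerm Hs) 1 :=
  ⟨⟨sysZ X.form, sysZForm X.form⟩, ⟨sysZForm_unimodular X.form, sysZForm_hermitian X.form⟩⟩

/-- The map part of the functor `F`. -/
def Fmap {X Y : SysFormObj Hs} (u : X ⟶ Y) : Fobj X ⟶ Fobj Y := by
  haveI := u.2.1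
  refine ⟨⟨⟨u.1, (inv (u.1 : X.pt ⟶ Y.pt) : Y.pt ⟶ X.pt), fun i => ?_, fun i => ?_⟩, ?_, ?_⟩⟩
  · show u.1 ≫ (Hs i).omega Y.pt ≫ (Hs i).starMap (Y.form i) =
      ((Hs i).omega X.pt ≫ (Hs i).starMap (X.form i)) ≫ (Hs i).starMap (inv u.1)
    calc u.1 ≫ (Hs i).omega Y.pt ≫ (Hs i).starMap (Y.form i)
        = (Hs i).omega X.pt ≫ (Hs i).starMap ((Hs i).starMap u.1) ≫
            (Hs i).starMap (Y.form i) := by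
          rw [← Category.assoc, (Hs i).omega_natural u.1, Category.assoc]
      _ = (Hs i).omega X.pt ≫ (Hs i).starMap (Y.form i ≫ (Hs i).starMap u.1) := by
          rw [(Hs i).starMap_comp]
      _ = (Hs i).omega X.pt ≫ (Hs i).starMap (inv u.1 ≫ X.form i) := by
          rw [u.2.2 i, IsIso.inv_hom_id_assoc]
      _ = ((Hs i).omega X.pt ≫ (Hs i).starMap (X.form i)) ≫ (Hs i).starMap (inv u.1) := by
          rw [(Hs i).starMap_comp, Category.assoc]
  · show u.1 ≫ Y.form i = X.form i ≫ (Hs i).starMap (inv u.1)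
    rw [u.2.2 i, Category.assoc, Category.assoc, ← (Hs i).starMap_comp,
      IsIso.inv_hom_id, (Hs i).starMap_id, Category.comp_id]
  · exact TDAObj.isIso_of _ (by show IsIso u.1; infer_instance)
      (by show IsIso (inv u.1); infer_instance)
  · apply TDAObj.hom_ext
    · show 𝟙 X.pt = u.1 ≫ 𝟙 Y.pt ≫ inv u.1
      simp
    · show 𝟙 X.pt = (u.1 ≫ 𝟙 Y.pt) ≫ inv u.1
      simp

/-- The functor `F` from systems of sesquilinear forms over `(C, {(*_i, ω_i)})` to
unimodular `1`-hermitian forms over `TDA_I(C)`, given by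
`F(M, {s_i}) = ((M, M, {s_i^{*_i} ∘ ω_{i,M}}, {s_i}), (id_M, id_M^op))` and
`F(ψ) = (ψ, (ψ⁻¹)^op)`. -/
def Ffunctor (Hs : ι → HermStructure C) : SysFormObj Hs ⥤ HermFormCat (tdaHerm Hs) 1 where
  obj := Fobj
  map := Fmap
  map_id X := by
    haveI : IsIso ((𝟙 X : X ⟶ X).1) := (𝟙 X : X ⟶ X).2.1
    apply ObjectProperty.hom_ext; apply Subtype.ext; apply TDAObj.hom_ext
    · rfl
    · show inv ((𝟙 X : X ⟶ X).1) = 𝟙 X.pt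
      change inv (𝟙 X.pt) = 𝟙 X.pt
      simp
  map_comp {X Y Z} u v := by
    haveI := u.2.1; haveI := v.2.1
    haveI : IsIso ((u ≫ v).1) := (u ≫ v).2.1
    apply ObjectProperty.hom_ext; apply Subtype.ext; apply TDAObj.hom_ext
    · rfl
    · show inv ((u ≫ v).1) = inv v.1 ≫ inv u.1
      change inv (u.1 ≫ v.1) = inv v.1 ≫ inv u.1
      simp

end FFunctor

end HermCat

/-! A morphism `F(M, s) ⟶ F(M', s')` is a pair `(φ, ψ)` whose isometry condition on the
first component says `ψ = φ⁻¹`; its `g`-components then say that `φ` is an isometry of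
systems, so `F` is full and faithful. A unimodular `1`-hermitian form `h` on
`Z = (M, N, {f_i}, {g_i})` has both components equal to one isomorphism `α : M ⟶ N`, and
`(id_M, α^op)` is an isometry from `(Z, h)` to `F(M, {α^{*_i} ∘ g_i})`. -/

namespace HermCat

variable {C : Type u} [Category.{v} C] [Preadditive C] {ι : Type v}

namespace HermStructure

variable (H : HermStructure C)

instance isIso_starMap {X Y : C} (f : X ⟶ Y) [IsIso f] : IsIso (H.starMap f) :=
  ⟨H.starMap (inv f), by rw [← H.starMap_comp, IsIso.inv_hom_id, H.starMap_id],
    by rw [← H.starMap_comp, IsIso.hom_inv_id, H.starMap_id]⟩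

theorem starMap_inv {X Y : C} (f : X ⟶ Y) [IsIso f] : H.starMap (inv f) = inv (H.starMap f) :=
  IsIso.eq_inv_of_hom_inv_id (by rw [← H.starMap_comp, IsIso.inv_hom_id, H.starMap_id])

theorem eq_comp_comp_starMap_of_comp_eq {M M' : C}
    {s : M ⟶ H.star M} {s' : M' ⟶ H.star M'} (φ : M ⟶ M') [IsIso φ]
    (h : φ ≫ s' = s ≫ H.starMap (inv φ)) : s = φ ≫ s' ≫ H.starMap φ := by
  rw [reassoc_of% h, H.starMap_inv, IsIso.inv_hom_id, Category.comp_id]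

end HermStructure

namespace FormObj

variable {H : HermStructure C}

instance isIso_val {X Y : FormObj H} (u : X ⟶ Y) : IsIso u.1 := u.2.1

instance isIso_hom {X Y : FormObj H} (u : X ⟶ Y) : IsIso u :=
  ⟨⟨inv u.1, inferInstance, by simp [u.2.2, ← H.starMap_comp, H.starMap_id]⟩,
    Subtype.ext (IsIso.hom_inv_id u.1), Subtype.ext (IsIso.inv_hom_id u.1)⟩

end FormObj

variable {Hs : ι → HermStructure C}

namespace TDAObj

instance isIso_φ {Z Z' : TDAObj Hs} (u : Z ⟶ Z') [IsIso u] : IsIso u.φ :=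
  ⟨(inv u).φ, by rw [← comp_φ, IsIso.hom_inv_id, id_φ], by rw [← comp_φ, IsIso.inv_hom_id, id_φ]⟩

end TDAObj

theorem ψ_eq_φ_of_isEpsHermitian_one {Z : TDAObj Hs} {h : Z ⟶ (tdaHerm Hs).star Z}
    (hh : (tdaHerm Hs).IsEpsHermitian 1 h) : h.ψ = h.φ := by
  have hψ := congrArg TDAObj.Hom.ψ hh
  rw [one_zsmul] at hψ
  exact hψ.trans (Category.comp_id h.φ)

theorem Ffunctor_hom_φ_comp_ψ {X Y : SysFormObj Hs}
    (w : (Ffunctor Hs).obj X ⟶ (Ffunctor Hs).obj Y) : w.hom.1.φ ≫ w.hom.1.ψ = 𝟙 X.pt := by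
  -- the objects of `sysZ` are only definitionally `X.pt`, so `simp` cannot cancel the `𝟙`
  have hφ : 𝟙 X.pt = w.hom.1.φ ≫ 𝟙 _ ≫ w.hom.1.ψ := congrArg TDAObj.Hom.φ w.hom.2.2
  exact (hφ.trans (congrArg (w.hom.1.φ ≫ ·) (Category.id_comp _))).symm

instance Ffunctor_faithful : (Ffunctor Hs).Faithful where
  map_injective h := Subtype.ext (congrArg (fun w => w.hom.1.φ) h)

instance Ffunctor_full : (Ffunctor Hs).Full where
  map_surjective {X Y} w := by
    let φ : X.pt ⟶ Y.pt := w.hom.1.φ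
    have : IsIso φ := TDAObj.isIso_φ w.hom.1
    have hψ : w.hom.1.ψ = inv φ := IsIso.eq_inv_of_hom_inv_id (f := φ) (Ffunctor_hom_φ_comp_ψ w)
    refine ⟨⟨φ, this, fun i => (Hs i).eq_comp_comp_starMap_of_comp_eq φ ?_⟩,
      ObjectProperty.hom_ext _ (Subtype.ext (TDAObj.hom_ext rfl hψ.symm))⟩
    rw [← hψ]
    exact w.hom.1.condg i

def TDAObj.toSysZ (Z : TDAObj Hs) (α : Z.M ⟶ Z.N)
    (hα : ∀ i, α ≫ (Hs i).omega Z.N ≫ (Hs i).starMap (Z.g i) = Z.f i ≫ (Hs i).starMap α) :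
    Z ⟶ sysZ (fun i => Z.g i ≫ (Hs i).starMap α) where
  φ := 𝟙 Z.M
  ψ := α
  condf i := by
    change 𝟙 Z.M ≫ (Hs i).omega Z.M ≫ (Hs i).starMap (Z.g i ≫ (Hs i).starMap α) = _
    rw [Category.id_comp, (Hs i).starMap_comp, ← Category.assoc, ← (Hs i).omega_natural,
      Category.assoc]
    exact hα i
  condg i := Category.id_comp _

theorem comp_omega_starMap_g_of_form {Z : TDAObj Hs} (h : Z ⟶ (tdaHerm Hs).star Z)
    {α : Z.M ⟶ Z.N} (hφ : h.φ = α) (hψ : h.ψ = α) (i : ι) :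
    α ≫ (Hs i).omega Z.N ≫ (Hs i).starMap (Z.g i) = Z.f i ≫ (Hs i).starMap α := by
  have hf := h.condf i
  rw [hφ, hψ] at hf
  exact hf

theorem isIsometry_toSysZ {Z : TDAObj Hs} (h : Z ⟶ (tdaHerm Hs).star Z) [IsIso h]
    {α : Z.M ⟶ Z.N} (hφ : h.φ = α) (hψ : h.ψ = α) :
    (tdaHerm Hs).IsIsometry h (sysZForm _)
      (Z.toSysZ α (comp_omega_starMap_g_of_form h hφ hψ)) := by
  have : IsIso α := by
    rw [← hφ]
    exact TDAObj.isIso_φ h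
  exact ⟨TDAObj.isIso_of _ (inferInstanceAs (IsIso (𝟙 Z.M))) this,
    TDAObj.hom_ext (hφ.trans (by simp : 𝟙 Z.M ≫ 𝟙 Z.M ≫ α = α).symm)
      (hψ.trans (by simp : (𝟙 Z.M ≫ 𝟙 Z.M) ≫ α = α).symm)⟩

instance Ffunctor_essSurj : (Ffunctor Hs).EssSurj where
  mem_essImage Y := by
    have : IsIso Y.obj.form := Y.property.1.1
    have hh := ψ_eq_φ_of_isEpsHermitian_one Y.property.2
    let u : Y.obj ⟶ ((Ffunctor Hs).obj ⟨Y.obj.pt.M, _⟩).obj :=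
      ⟨_, isIsometry_toSysZ Y.obj.form rfl hh⟩
    exact ⟨_, ⟨(ObjectProperty.isoMk _ (asIso u)).symm⟩⟩

theorem Ffunctor_isEquivalence_general {C : Type u} [Category.{v} C] [Preadditive C]
    {ι : Type v} (Hs : ι → HermStructure C) :
    (Ffunctor Hs).IsEquivalence :=
  { }

/-- **Statement 6.** For an additive category `C` with a nonempty family
`{(*_i, ω_i)}_{i ∈ I}` of hermitian structures, the functor
`F(M, {s_i}) = ((M, M, {s_i^{*_i} ∘ ω_{i,M}}, {s_i}), (id_M, id_M^op))`,
`F(ψ) = (ψ, (ψ⁻¹)^op)` from the category of systems of sesquilinear forms over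
`(C, {(*_i, ω_i)})` to the category of unimodular `1`-hermitian forms over `TDA_I(C)`
is an equivalence of categories. -/
theorem Ffunctor_isEquivalence {C : Type u} [Category.{v} C] [Preadditive C]
    {ι : Type v} [Nonempty ι] (Hs : ι → HermStructure C) :
    (Ffunctor Hs).IsEquivalence :=
  Ffunctor_isEquivalence_general Hs

end HermCat
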